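/- arXiv:2501.17832 — 3 statements merged into one kernel-verified Lean document; each statement's English description precedes it below -/
import Mathlib

section
/- Let G be a unimodular locally compact group with Haar measure, and let (π, H) be an irreducible unitary representation of G that is square-integrable with formal degree d(π) > 0. Then for all h, h', v, v' ∈ H, the matrix coefficients c_{h,h'}(g) = ⟨π(g)h, h'⟩ and c_{v,v'}(g) = ⟨π(g)v, v'⟩ satisfy ⟨c_{h,h'}, c_{v,v'}⟩_{L²(G)} = (1/d(π)) ⟨h, v⟩ ⟨v', h'⟩ (Schur orthogonality relations). -/
/-!
For fixed `b, b'`, the pairing `(a, a') ↦ ⟨c_{a,b}, c_{a',b'}⟩_{L²}` is the inner product of two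
bounded maps `H → L²(G)` (bounded by the closed graph theorem), and right invariance of `μ` makes it
`π`-invariant. The operator representing it therefore commutes with `π`, so it is a scalar by
Schur's lemma and the pairing is a multiple of `⟨a, a'⟩`. Left invariance gives the same in
`(b, b')`, so the pairing is `c ⟨a, a'⟩ ⟨b', b⟩`, and evaluating at `h₀` identifies `c = d⁻¹`.

Schur's lemma is proved through the continuous functional calculus: if a self-adjoint intertwiner
`A` had two points `a < b` in its spectrum, then `(A - m)⁺` and `(m - A)⁺` for `m = (a + b) / 2`
would be nonzero intertwiners with product zero, whereas the kernel of a nonzero intertwiner is a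
proper closed invariant subspace, hence trivial.
-/

open MeasureTheory Filter Topology ComplexConjugate
open scoped ENNReal ComplexStarModule

section InnerProduct

variable {H : Type*} [NormedAddCommGroup H] [InnerProductSpace ℂ H]

lemma exists_eq_mul_inner_mul_inner {P : H → H → H → H → ℂ}
    (hleft : ∀ b b', ∃ α, ∀ a a', P a b a' b' = α * inner ℂ a' a)
    (hright : ∀ a a', ∃ γ, ∀ b b', P a b a' b' = γ * inner ℂ b b') :
    ∃ c, ∀ a b a' b', P a b a' b' = c * inner ℂ a' a * inner ℂ b b' := by
  rcases subsingleton_or_nontrivial H with hH | hH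
  · refine ⟨0, fun a b a' b' => ?_⟩
    obtain ⟨α, hα⟩ := hleft b b'
    simp [hα, Subsingleton.elim a' 0]
  obtain ⟨h₀, h₀ne⟩ := exists_ne (0 : H)
  have hn : inner ℂ h₀ h₀ ≠ 0 := inner_self_ne_zero.2 h₀ne
  obtain ⟨γ, hγ⟩ := hright h₀ h₀
  refine ⟨γ / inner ℂ h₀ h₀, fun a b a' b' => ?_⟩
  obtain ⟨α, hα⟩ := hleft b b'
  have hα' : α = γ / inner ℂ h₀ h₀ * inner ℂ b b' := by
    rw [div_mul_eq_mul_div, eq_div_iff hn, ← hα h₀ h₀, hγ]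
  rw [hα, hα']
  ring

end InnerProduct

section PointwiseToLp

variable {𝕜 X H E : Type*} [NontriviallyNormedField 𝕜] [MeasurableSpace X] {μ : Measure X}
  [NormedAddCommGroup H] [NormedSpace 𝕜 H] [NormedAddCommGroup E] [NormedSpace 𝕜 E]
  {p : ℝ≥0∞} (F : X → H →L[𝕜] E) (hF : ∀ h, MemLp (fun x => F x h) p μ)

noncomputable def pointwiseToLpₗ : H →ₗ[𝕜] Lp E p μ where
  toFun h := (hF h).toLp
  map_add' h₁ h₂ := by
    simp_rw [map_add]
    exact MemLp.toLp_add _ _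
  map_smul' c h := by
    simp_rw [map_smul]
    exact MemLp.toLp_const_smul _ _

lemma pointwiseToLpₗ_ae_eq (h : H) : pointwiseToLpₗ F hF h =ᵐ[μ] fun x => F x h :=
  (hF h).coeFn_toLp

/-- `Lp` convergence gives a.e. convergence along a subsequence, and there the limit has to be
the pointwise one. -/
lemma pointwiseToLpₗ_seq_closed_graph [Fact (1 ≤ p)] (u : ℕ → H) (h : H) (f : Lp E p μ)
    (hu : Tendsto u atTop (𝓝 h)) (hf : Tendsto (pointwiseToLpₗ F hF ∘ u) atTop (𝓝 f)) :
    f = pointwiseToLpₗ F hF h := by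
  obtain ⟨ns, hns, hae⟩ := (tendstoInMeasure_of_tendsto_Lp hf).exists_seq_tendsto_ae
  refine Lp.ext (EventuallyEq.trans ?_ (pointwiseToLpₗ_ae_eq F hF h).symm)
  filter_upwards [hae, ae_all_iff.2 fun n => pointwiseToLpₗ_ae_eq F hF (u (ns n))]
    with x hx hun
  refine tendsto_nhds_unique (hx.congr fun n => hun n) ?_
  exact ((F x).continuous.tendsto h).comp (hu.comp hns.tendsto_atTop)

variable [Fact (1 ≤ p)] [CompleteSpace H] [CompleteSpace E]

noncomputable def pointwiseToLp : H →L[𝕜] Lp E p μ :=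
  .ofSeqClosedGraph (pointwiseToLpₗ_seq_closed_graph F hF)

lemma pointwiseToLp_ae_eq (h : H) : pointwiseToLp F hF h =ᵐ[μ] fun x => F x h :=
  pointwiseToLpₗ_ae_eq F hF h

end PointwiseToLp

lemma inner_pointwiseToLp {𝕜 X H E : Type*} [RCLike 𝕜] [MeasurableSpace X] {μ : Measure X}
    [NormedAddCommGroup H] [NormedSpace 𝕜 H] [CompleteSpace H]
    [NormedAddCommGroup E] [InnerProductSpace 𝕜 E] [CompleteSpace E]
    (F F' : X → H →L[𝕜] E) (hF : ∀ h, MemLp (fun x => F x h) 2 μ)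
    (hF' : ∀ h, MemLp (fun x => F' x h) 2 μ) (a a' : H) :
    inner 𝕜 (pointwiseToLp F' hF' a') (pointwiseToLp F hF a)
      = ∫ x, inner 𝕜 (F' x a') (F x a) ∂μ := by
  rw [L2.inner_def]
  refine integral_congr_ae ?_
  filter_upwards [pointwiseToLp_ae_eq F' hF' a', pointwiseToLp_ae_eq F hF a] with x h' h
  rw [h, h']

namespace UnitaryRepresentation

variable {G : Type*} [Group G] {H : Type*} [NormedAddCommGroup H] [InnerProductSpace ℂ H]

def IsIrreducible (π : G →* (H ≃ₗᵢ[ℂ] H)) : Prop :=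
  ∀ W : Submodule ℂ H, IsClosed (W : Set H) → (∀ g : G, ∀ w ∈ W, π g w ∈ W) → W = ⊥ ∨ W = ⊤

variable {π : G →* (H ≃ₗᵢ[ℂ] H)}

lemma map_mul_apply (π : G →* (H ≃ₗᵢ[ℂ] H)) (g g' : G) (a : H) :
    π (g * g') a = π g (π g' a) := by
  rw [map_mul]
  rfl

lemma map_apply_map_inv_apply (π : G →* (H ≃ₗᵢ[ℂ] H)) (g : G) (a : H) : π g (π g⁻¹ a) = a := by
  simp [map_inv]

lemma inner_map_inv_apply (π : G →* (H ≃ₗᵢ[ℂ] H)) (g : G) (a b : H) :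
    inner ℂ (π g⁻¹ a) b = inner ℂ a (π g b) := by
  rw [map_inv, LinearIsometryEquiv.coe_inv, LinearIsometryEquiv.inner_map_eq_flip,
    LinearIsometryEquiv.symm_symm]

lemma IsIrreducible.injective_or_eq_zero (hπ : IsIrreducible π) {T : H →L[ℂ] H}
    (hT : ∀ g, Commute (π g : H →L[ℂ] H) T) : Function.Injective T ∨ T = 0 := by
  refine (hπ _ T.isClosed_ker fun g w hw => ?_).imp (fun hker => ?_) fun hker => ?_
  · have hcomm : π g (T w) = T (π g w) := congr($(hT g) w)
    simp only [LinearMap.mem_ker, ContinuousLinearMap.coe_coe] at hw ⊢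
    rw [← hcomm, hw, map_zero]
  · exact (injective_iff_map_eq_zero T).2 fun x hx => by
      simpa [hker] using (LinearMap.mem_ker (f := (T : H →ₗ[ℂ] H))).2 hx
  · ext x
    simpa using hker.ge (Submodule.mem_top (x := x))

lemma IsIrreducible.eq_zero_or_eq_zero_of_mul_eq_zero (hπ : IsIrreducible π) {P Q : H →L[ℂ] H}
    (hQ : ∀ g, Commute (π g : H →L[ℂ] H) Q) (hQP : Q * P = 0) : Q = 0 ∨ P = 0 := by
  refine (hπ.injective_or_eq_zero hQ).symm.imp id fun hinj => ?_
  ext x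
  exact hinj (by simpa using congr($hQP x))

variable [CompleteSpace H]

lemma star_coe_map_inv (π : G →* (H ≃ₗᵢ[ℂ] H)) (g : G) :
    star (π g⁻¹ : H →L[ℂ] H) = π g := by
  rw [ContinuousLinearMap.star_eq_adjoint, LinearIsometryEquiv.adjoint_eq_symm, map_inv]
  rfl

namespace IsIrreducible

variable (hπ : IsIrreducible π)
include hπ

lemma spectrum_subsingleton {A : H →L[ℂ] H} (hA : IsSelfAdjoint A)
    (hAπ : ∀ g, Commute (π g : H →L[ℂ] H) A) : (spectrum ℝ A).Subsingleton := by
  have cfc_ne_zero : ∀ f : ℝ → ℝ, Continuous f → ∀ x ∈ spectrum ℝ A, f x ≠ 0 → cfc f A ≠ 0 := by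
    intro f hf x hx hfx hzero
    have hmem : f x ∈ spectrum ℝ (cfc f A) := cfc_map_spectrum f A hA ▸ ⟨x, hx, rfl⟩
    simp [hzero, spectrum.mem_iff, hfx.isUnit.map] at hmem
  suffices ∀ a ∈ spectrum ℝ A, ∀ b ∈ spectrum ℝ A, ¬ a < b from
    fun a ha b hb => le_antisymm (not_lt.1 (this b hb a ha)) (not_lt.1 (this a ha b hb))
  intro a ha b hb hab
  set m := (a + b) / 2
  have hprod : cfc (fun x => max (x - m) 0) A * cfc (fun x => max (m - x) 0) A = 0 := by
    rw [← cfc_mul _ _ A (by fun_prop) (by fun_prop)]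
    convert cfc_zero ℝ A using 2
    funext x
    rcases le_total x m with h | h <;> simp [h]
  rcases hπ.eq_zero_or_eq_zero_of_mul_eq_zero (fun g => ((hAπ g).symm.cfc_real _).symm) hprod
    with h | h
  · exact cfc_ne_zero _ (by fun_prop) b hb (by simp [m]; linarith) h
  · exact cfc_ne_zero _ (by fun_prop) a ha (by simp [m]; linarith) h

lemma exists_eq_algebraMap_of_isSelfAdjoint {A : H →L[ℂ] H} (hA : IsSelfAdjoint A)
    (hAπ : ∀ g, Commute (π g : H →L[ℂ] H) A) : ∃ r : ℝ, A = algebraMap ℝ _ r := by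
  have ⟨r, hr⟩ : ∃ r, spectrum ℝ A ⊆ {r} := by
    rcases (hπ.spectrum_subsingleton hA hAπ).eq_empty_or_singleton with h | ⟨r, h⟩
    · exact ⟨0, h ▸ Set.empty_subset _⟩
    · exact ⟨r, h.subset⟩
  exact ⟨r, CFC.eq_algebraMap_of_spectrum_subset_singleton A r hr hA⟩

theorem exists_eq_smul_one {T : H →L[ℂ] H} (hT : ∀ g, Commute (π g : H →L[ℂ] H) T) :
    ∃ c : ℂ, T = c • 1 := by
  have hTstar : ∀ g, Commute (π g : H →L[ℂ] H) (star T) := fun g => by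
    have := (hT g⁻¹).star_star
    rwa [star_coe_map_inv] at this
  obtain ⟨r, hr⟩ := hπ.exists_eq_algebraMap_of_isSelfAdjoint (ℜ T).2 fun g => by
    rw [realPart_apply_coe]
    exact ((hT g).add_right (hTstar g)).smul_right _
  obtain ⟨s, hs⟩ := hπ.exists_eq_algebraMap_of_isSelfAdjoint (ℑ T).2 fun g => by
    rw [imaginaryPart_apply_coe]
    exact (((hT g).sub_right (hTstar g)).smul_right _).smul_right _
  refine ⟨r + Complex.I * s, ?_⟩
  rw [← realPart_add_I_smul_imaginaryPart T, hr, hs, Algebra.algebraMap_eq_smul_one,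
    Algebra.algebraMap_eq_smul_one]
  module

theorem exists_inner_eq_mul_inner {E : Type*} [NormedAddCommGroup E] [InnerProductSpace ℂ E]
    [CompleteSpace E] (S S' : H →L[ℂ] E)
    (hinv : ∀ g a a', inner ℂ (S' (π g a')) (S (π g a)) = inner ℂ (S' a') (S a)) :
    ∃ c : ℂ, ∀ a a', inner ℂ (S' a') (S a) = c * inner ℂ a' a := by
  set T := S'.adjoint ∘L S
  have hT : ∀ a a', inner ℂ a' (T a) = inner ℂ (S' a') (S a) := fun a a' =>
    ContinuousLinearMap.adjoint_inner_right S' a' (S a)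
  have hTπ : ∀ g a, T (π g a) = π g (T a) := fun g a => ext_inner_left ℂ fun a' => by
    rw [hT, ← inner_map_inv_apply, hT, ← hinv g a (π g⁻¹ a'), map_apply_map_inv_apply]
  obtain ⟨c, hc⟩ := hπ.exists_eq_smul_one fun g => ContinuousLinearMap.ext fun a => (hTπ g a).symm
  refine ⟨c, fun a a' => ?_⟩
  rw [← hT, hc]
  simp

theorem exists_integral_eq_mul_inner {X : Type*} [MeasurableSpace X] {μ : Measure X}
    (F F' : X → H →L[ℂ] ℂ) (hF : ∀ h, MemLp (fun x => F x h) 2 μ)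
    (hF' : ∀ h, MemLp (fun x => F' x h) 2 μ)
    (hinv : ∀ g a a',
      ∫ x, conj (F' x (π g a')) * F x (π g a) ∂μ = ∫ x, conj (F' x a') * F x a ∂μ) :
    ∃ c : ℂ, ∀ a a', ∫ x, conj (F' x a') * F x a ∂μ = c * inner ℂ a' a := by
  have hL2 : ∀ a a', inner ℂ (pointwiseToLp F' hF' a') (pointwiseToLp F hF a)
      = ∫ x, conj (F' x a') * F x a ∂μ := fun a a' => by
    simp only [inner_pointwiseToLp, RCLike.inner_apply']
  simp_rw [← hL2] at hinv ⊢
  exact hπ.exists_inner_eq_mul_inner _ _ hinv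

variable [MeasurableSpace G] [MeasurableMul G] {μ : Measure G}
  (hL2 : ∀ h h' : H, MemLp (fun g => inner ℂ h' (π g h)) 2 μ)
include hL2

theorem exists_integral_coeff_eq_mul_inner_left [μ.IsMulRightInvariant] (b b' : H) :
    ∃ α : ℂ, ∀ a a',
      ∫ g, inner ℂ b (π g a) * conj (inner ℂ b' (π g a')) ∂μ = α * inner ℂ a' a := by
  have hF : ∀ b a, MemLp (fun g => (innerSL ℂ b ∘L (π g : H →L[ℂ] H)) a) 2 μ :=
    fun b a => hL2 a b
  obtain ⟨α, hα⟩ := hπ.exists_integral_eq_mul_inner _ _ (hF b) (hF b') fun x a a' => by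
    simp only [ContinuousLinearMap.comp_apply, innerSL_apply_apply, ContinuousLinearEquiv.coe_coe,
      LinearIsometryEquiv.coe_toContinuousLinearEquiv, ← map_mul_apply]
    exact integral_mul_right_eq_self (fun g => conj (inner ℂ b' (π g a')) * inner ℂ b (π g a)) x
  exact ⟨α, fun a a' => by simpa [mul_comm] using hα a a'⟩

theorem exists_integral_coeff_eq_mul_inner_right [μ.IsMulLeftInvariant] (a a' : H) :
    ∃ γ : ℂ, ∀ b b',
      ∫ g, inner ℂ b (π g a) * conj (inner ℂ b' (π g a')) ∂μ = γ * inner ℂ b b' := by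
  have hF : ∀ a b, MemLp (fun g => innerSL ℂ (π g a) b) 2 μ :=
    fun a b => by simpa [Pi.star_def, inner_conj_symm] using (hL2 a b).star
  obtain ⟨γ, hγ⟩ := hπ.exists_integral_eq_mul_inner _ _ (hF a) (hF a') fun x b b' => by
    simp only [innerSL_apply_apply, ← inner_map_inv_apply, ← map_mul_apply]
    exact integral_mul_left_eq_self (fun g => conj (inner ℂ (π g a') b') * inner ℂ (π g a) b) x⁻¹
  refine ⟨conj γ, fun b b' => ?_⟩
  have := congrArg conj (hγ b b')
  rw [← integral_conj] at this
  simpa [mul_comm, inner_conj_symm] using this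

theorem exists_integral_coeff_eq [μ.IsMulLeftInvariant] [μ.IsMulRightInvariant] :
    ∃ c : ℂ, ∀ h h' v v', ∫ g, inner ℂ h' (π g h) * conj (inner ℂ v' (π g v)) ∂μ
      = c * inner ℂ v h * inner ℂ h' v' :=
  exists_eq_mul_inner_mul_inner (hπ.exists_integral_coeff_eq_mul_inner_left hL2)
    (hπ.exists_integral_coeff_eq_mul_inner_right hL2)

end IsIrreducible

end UnitaryRepresentation

theorem schur_orthogonality_general
    {G : Type*} [Group G] [TopologicalSpace G] [IsTopologicalGroup G]
    [MeasurableSpace G] [BorelSpace G]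
    (μ : Measure G) [μ.IsHaarMeasure] [μ.IsMulRightInvariant]
    {H : Type*} [NormedAddCommGroup H] [InnerProductSpace ℂ H] [CompleteSpace H]
    (π : G →* (H ≃ₗᵢ[ℂ] H))
    -- irreducibility:
    (hirr : ∀ W : Submodule ℂ H, IsClosed (W : Set H) →
      (∀ g : G, ∀ w ∈ W, π g w ∈ W) → W = ⊥ ∨ W = ⊤)
    -- square-integrability of all matrix coefficients:
    (hL2 : ∀ h h' : H, MemLp (fun g => (inner ℂ h' (π g h) : ℂ)) 2 μ)
    -- the formal degree `d`, normalized on a nonzero vector `h₀`: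
    (d : ℝ) (h₀ : H) (h₀ne : h₀ ≠ 0)
    (hdeg : ∫ g, ‖(inner ℂ h₀ (π g h₀) : ℂ)‖ ^ 2 ∂μ = d⁻¹ * ‖h₀‖ ^ 4) :
    ∀ h h' v v' : H,
      ∫ g, (inner ℂ h' (π g h) : ℂ) * conj (inner ℂ v' (π g v) : ℂ) ∂μ
        = (d⁻¹ : ℂ) * (inner ℂ v h : ℂ) * (inner ℂ h' v' : ℂ) := by
  obtain ⟨c, hc⟩ := UnitaryRepresentation.IsIrreducible.exists_integral_coeff_eq hirr hL2
  have hc_norm : c * ‖h₀‖ ^ 4 = (d⁻¹ : ℂ) * ‖h₀‖ ^ 4 := by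
    have := hc h₀ h₀ h₀ h₀
    simp_rw [Complex.mul_conj', ← Complex.ofReal_pow, integral_complex_ofReal, hdeg,
      inner_self_eq_norm_sq_to_K] at this
    push_cast at this
    linear_combination -this
  have hnorm : (‖h₀‖ : ℂ) ^ 4 ≠ 0 := by exact_mod_cast pow_ne_zero 4 (norm_ne_zero_iff.2 h₀ne)
  intro h h' v v'
  rw [hc, mul_right_cancel₀ hnorm hc_norm]

/-- **Schur orthogonality relations.** Let `G` be a unimodular locally compact group with
Haar measure `μ`, and `(π, H)` an irreducible unitary representation that is square-integrable,
with formal degree `d > 0` (normalized via a nonzero vector `h₀`).  Then for all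
`h h' v v' : H` the matrix coefficients `c_{h,h'}(g) = ⟨π(g)h, h'⟩` satisfy
`⟨c_{h,h'}, c_{v,v'}⟩_{L²(G)} = d⁻¹ ⟨h,v⟩ ⟨v',h'⟩`.
(Inner products are written in the mathematicians' convention, linear in the first variable:
`⟨a,b⟩ = ⟪b,a⟫_ℂ` in Mathlib's convention.) -/
theorem schur_orthogonality
    {G : Type*} [Group G] [TopologicalSpace G] [IsTopologicalGroup G]
    [LocallyCompactSpace G] [MeasurableSpace G] [BorelSpace G]
    (μ : Measure G) [μ.IsHaarMeasure] [μ.IsMulRightInvariant]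
    {H : Type*} [NormedAddCommGroup H] [InnerProductSpace ℂ H] [CompleteSpace H]
    (π : G →* (H ≃ₗᵢ[ℂ] H))
    (hcont : ∀ h h' : H, Continuous fun g => (inner ℂ h' (π g h) : ℂ))
    -- irreducibility:
    (hirr : ∀ W : Submodule ℂ H, IsClosed (W : Set H) →
      (∀ g : G, ∀ w ∈ W, π g w ∈ W) → W = ⊥ ∨ W = ⊤)
    -- square-integrability of all matrix coefficients:
    (hL2 : ∀ h h' : H, MemLp (fun g => (inner ℂ h' (π g h) : ℂ)) 2 μ)
    -- the formal degree `d`, normalized on a nonzero vector `h₀`: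
    (d : ℝ) (hd : 0 < d) (h₀ : H) (h₀ne : h₀ ≠ 0)
    (hdeg : ∫ g, ‖(inner ℂ h₀ (π g h₀) : ℂ)‖ ^ 2 ∂μ = d⁻¹ * ‖h₀‖ ^ 4) :
    ∀ h h' v v' : H,
      ∫ g, (inner ℂ h' (π g h) : ℂ) * conj (inner ℂ v' (π g v) : ℂ) ∂μ
        = (d⁻¹ : ℂ) * (inner ℂ v h : ℂ) * (inner ℂ h' v' : ℂ) :=
  schur_orthogonality_general μ π hirr hL2 d h₀ h₀ne hdeg
end

section
/- Let G be a unimodular locally compact group, and let (π, H) and (σ, V) be inequivalent irreducible square-integrable unitary representations of G. Then for all h, h' ∈ H and v, v' ∈ V, the matrix coefficients are orthogonal in L²(G): ⟨c_{h,h'}, c_{v,v'}⟩_{L²(G)} = 0. -/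
/-!
By the closed graph theorem the coefficient maps `k ↦ c_{k,h'}` and `w ↦ c_{w,v'}` are bounded
operators `T : H → L²(G)` and `U : V → L²(G)`. Right invariance of `μ` gives
`⟪U (σ g w), T (π g k)⟫ = ⟪U w, T k⟫`, so `U† T : H → V` intertwines `π` and `σ`.
Schur's lemma: for a nonzero intertwiner `S`, the operator `S† S` commutes with the irreducible `π`,
so by the continuous functional calculus its spectrum is a point and `S† S` is a positive scalar;
then `S` is a multiple of a unitary equivalence. Hence `U† T = 0`, and the integral is
`⟪v, U† T h⟫ = 0`.
-/

open MeasureTheory ComplexConjugate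
open scoped ENNReal InnerProductSpace InnerProduct

section ClosedGraph

variable {α 𝕜 E F : Type*} [MeasurableSpace α] {μ : Measure α} {p : ℝ≥0∞} [Fact (1 ≤ p)]
  [NontriviallyNormedField 𝕜] [NormedAddCommGroup E] [NormedSpace 𝕜 E] [CompleteSpace E]
  [NormedAddCommGroup F] [NormedSpace 𝕜 F] [CompleteSpace F]

theorem exists_continuousLinearMap_Lp_ae_eq (c : α → E →L[𝕜] F)
    (hc : ∀ x, MemLp (fun a => c a x) p μ) :
    ∃ T : E →L[𝕜] Lp F p μ, ∀ x, T x =ᵐ[μ] fun a => c a x := by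
  let T : E →ₗ[𝕜] Lp F p μ :=
    { toFun := fun x => (hc x).toLp
      map_add' := fun x y => by
        simp only [map_add]
        exact (hc x).toLp_add (hc y)
      map_smul' := fun r x => by
        simp only [map_smul]
        exact (hc x).toLp_const_smul r }
  have hT : ∀ x, T x =ᵐ[μ] fun a => c a x := fun x => (hc x).coeFn_toLp
  -- The graph is closed: `Lp`-convergence gives a.e. convergence along a subsequence.
  refine ⟨⟨T, T.continuous_of_seq_closed_graph fun u x y hu hTu => ?_⟩, hT⟩
  obtain ⟨ns, hns, hae⟩ := (tendstoInMeasure_of_tendsto_Lp hTu).exists_seq_tendsto_ae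
  refine Lp.ext (.trans ?_ (hT x).symm)
  filter_upwards [hae, ae_all_iff.2 fun n => hT (u n)] with a hya hua
  refine tendsto_nhds_unique hya ?_
  simp only [Function.comp_apply, hua]
  exact ((c a).continuous.tendsto x).comp (hu.comp hns.tendsto_atTop)

end ClosedGraph

theorem exists_continuous_mul_eq_zero_of_ne {a b : ℝ} (hab : a ≠ b) :
    ∃ f k : ℝ → ℝ, Continuous f ∧ Continuous k ∧ f a ≠ 0 ∧ k b ≠ 0 ∧ f * k = 0 := by
  set δ := |a - b|
  have hδ : 0 < δ := abs_pos.2 (sub_ne_zero.2 hab)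
  refine ⟨fun x => max 0 (δ - 2 * |x - a|), fun x => max 0 (δ - 2 * |x - b|),
    by fun_prop, by fun_prop, by simpa using hδ, by simpa using hδ, funext fun x => ?_⟩
  have : δ ≤ |x - a| + |x - b| := by
    simpa [abs_sub_comm x a] using abs_sub_le a x b
  simp only [Pi.mul_apply, Pi.zero_apply, mul_eq_zero, max_eq_left_iff]
  by_contra! h
  linarith [h.1, h.2]

theorem ContinuousLinearMap.norm_apply_eq_of_adjoint_comp_self {E F : Type*}
    [NormedAddCommGroup E] [InnerProductSpace ℂ E] [CompleteSpace E]
    [NormedAddCommGroup F] [InnerProductSpace ℂ F] [CompleteSpace F]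
    (S : E →L[ℂ] F) {r : ℝ} (hS : S† ∘L S = algebraMap ℝ (E →L[ℂ] E) r) (x : E) :
    ‖S x‖ = √r * ‖x‖ := by
  rw [S.apply_norm_eq_sqrt_inner_adjoint_left, hS, IsScalarTower.algebraMap_apply ℝ ℂ,
    Algebra.algebraMap_eq_smul_one, smul_apply, one_apply_eq_self, inner_smul_left,
    inner_self_eq_norm_sq_to_K]
  simp [← Complex.ofReal_pow, Real.sqrt_mul' _ (sq_nonneg _)]

namespace UnitaryRep

variable {G H V : Type*} [Group G]
  [NormedAddCommGroup H] [InnerProductSpace ℂ H] [NormedAddCommGroup V] [InnerProductSpace ℂ V]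

def IsIrreducible (π : G →* (H ≃ₗᵢ[ℂ] H)) : Prop :=
  ∀ W : Submodule ℂ H, IsClosed (W : Set H) → (∀ g : G, ∀ w ∈ W, π g w ∈ W) → W = ⊥ ∨ W = ⊤

def Intertwines (π : G →* (H ≃ₗᵢ[ℂ] H)) (σ : G →* (V ≃ₗᵢ[ℂ] V)) (S : H →L[ℂ] V) : Prop :=
  ∀ g h, S (π g h) = σ g (S h)

variable {π : G →* (H ≃ₗᵢ[ℂ] H)} {σ : G →* (V ≃ₗᵢ[ℂ] V)}

@[simp]
theorem apply_inv_apply (π : G →* (H ≃ₗᵢ[ℂ] H)) (g : G) (h : H) : π g (π g⁻¹ h) = h := by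
  rw [← Function.comp_apply (f := π g), ← LinearIsometryEquiv.coe_mul, ← map_mul, mul_inv_cancel,
    map_one, LinearIsometryEquiv.coe_one, id]

theorem intertwines_adjoint_comp [CompleteSpace V] {K : Type*} [NormedAddCommGroup K]
    [InnerProductSpace ℂ K] [CompleteSpace K] {T : H →L[ℂ] K} {U : V →L[ℂ] K}
    (hTU : ∀ g h v, ⟪U (σ g v), T (π g h)⟫_ℂ = ⟪U v, T h⟫_ℂ) :
    Intertwines π σ (U† ∘L T) := by
  intro g h
  refine ext_inner_left ℂ fun v => ?_
  calc ⟪v, (U† ∘L T) (π g h)⟫_ℂ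
      = ⟪U (σ g (σ g⁻¹ v)), T (π g h)⟫_ℂ := by
        simp [ContinuousLinearMap.adjoint_inner_right]
    _ = ⟪σ g⁻¹ v, (U† ∘L T) h⟫_ℂ := by
        rw [hTU, ContinuousLinearMap.comp_apply, ContinuousLinearMap.adjoint_inner_right]
    _ = ⟪v, σ g ((U† ∘L T) h)⟫_ℂ := by
        rw [← (σ g).inner_map_map, apply_inv_apply]

theorem Intertwines.adjoint_comp_self [CompleteSpace H] [CompleteSpace V] {S : H →L[ℂ] V}
    (hS : Intertwines π σ S) : Intertwines π π (S† ∘L S) :=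
  intertwines_adjoint_comp fun g h h' => by rw [hS, hS, LinearIsometryEquiv.inner_map_map]

theorem intertwines_self_iff_commute {A : H →L[ℂ] H} :
    Intertwines π π A ↔ ∀ g, Commute A ((π g).toContinuousLinearEquiv : H →L[ℂ] H) := by
  simp only [Intertwines, Commute, SemiconjBy, ContinuousLinearMap.ext_iff]
  rfl

theorem IsIrreducible.eq_zero_of_mul_eq_zero (hπ : IsIrreducible π) {P Q : H →L[ℂ] H}
    (hP : Intertwines π π P) (hQ : Q ≠ 0) (hPQ : P * Q = 0) : P = 0 := by
  obtain ⟨h, hQh⟩ := DFunLike.ne_iff.1 hQ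
  rcases hπ (LinearMap.ker (P : H →ₗ[ℂ] H)) P.isClosed_ker
    (fun g w hw => by simp_all [hP g w]) with hker | hker
  · refine absurd ?_ hQh
    simpa [hker] using (show Q h ∈ LinearMap.ker (P : H →ₗ[ℂ] H) from congr($hPQ h))
  · ext h
    simpa using hker.ge (Submodule.mem_top (x := h))

theorem IsIrreducible.spectrum_subsingleton [CompleteSpace H] (hπ : IsIrreducible π)
    {A : H →L[ℂ] H} (hA : IsSelfAdjoint A) (hAπ : Intertwines π π A) :
    (spectrum ℝ A).Subsingleton := by
  intro a ha b hb
  by_contra hab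
  have : Nontrivial (H →L[ℂ] H) := by
    by_contra h
    rw [not_nontrivial_iff_subsingleton] at h
    simp [spectrum.of_subsingleton] at ha
  -- Bumps at `a` and `b` with disjoint supports: `cfc f A`, `cfc k A` are nonzero, product zero.
  obtain ⟨f, k, hf, hk, hfa, hkb, hfk⟩ := exists_continuous_mul_eq_zero_of_ne hab
  have cfc_ne_zero : ∀ {φ : ℝ → ℝ} {x}, Continuous φ → x ∈ spectrum ℝ A → φ x ≠ 0 →
      cfc φ A ≠ 0 := by
    intro φ x hφ hx hφx h0
    have : φ x ∈ spectrum ℝ (cfc φ A) := cfc_map_spectrum φ A ▸ ⟨x, hx, rfl⟩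
    simp [h0, spectrum.zero_eq, hφx] at this
  refine cfc_ne_zero hf ha hfa (hπ.eq_zero_of_mul_eq_zero ?_ (cfc_ne_zero hk hb hkb) ?_)
  · exact intertwines_self_iff_commute.2 fun g =>
      (intertwines_self_iff_commute.1 hAπ g).cfc_real f
  · rw [← cfc_mul f k A, ← Pi.mul_def, hfk, cfc_zero]

theorem IsIrreducible.surjective_of_intertwines [CompleteSpace H] [Nontrivial H]
    (hσ : IsIrreducible σ) (U : H →ₗᵢ[ℂ] V) (hU : Intertwines π σ U.toContinuousLinearMap) :
    Function.Surjective U := by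
  have hclosed : IsClosed (LinearMap.range U.toLinearMap : Set V) := by
    simpa [LinearMap.coe_range] using U.isometry.isClosedEmbedding.isClosed_range
  rcases hσ _ hclosed (fun g _ ⟨h, hh⟩ => ⟨π g h, by simpa [← hh] using hU g h⟩) with hbot | htop
  · obtain ⟨h, hh⟩ := exists_ne (0 : H)
    exact (hh (U.injective (by simpa [hbot] using LinearMap.mem_range_self U.toLinearMap h))).elim
  · exact LinearMap.range_eq_top.1 htop

theorem IsIrreducible.exists_equiv_of_intertwines [CompleteSpace H] [CompleteSpace V]
    (hπ : IsIrreducible π) (hσ : IsIrreducible σ) {S : H →L[ℂ] V} (hS : Intertwines π σ S)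
    (hS0 : S ≠ 0) : ∃ e : H ≃ₗᵢ[ℂ] V, ∀ g h, e (π g h) = σ g (e h) := by
  obtain ⟨h₀, hh₀⟩ := DFunLike.ne_iff.1 hS0
  have : Nontrivial H := ⟨⟨h₀, 0, by rintro rfl; simp at hh₀⟩⟩
  have hsa : IsSelfAdjoint (S† ∘L S) := S.isPositive_adjoint_comp_self.isSelfAdjoint
  obtain ⟨r, hr⟩ := ContinuousFunctionalCalculus.spectrum_nonempty (R := ℝ) _ hsa
  have hnorm := S.norm_apply_eq_of_adjoint_comp_self <|
    CFC.eq_algebraMap_of_spectrum_subset_singleton _ r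
      fun s hs => hπ.spectrum_subsingleton hsa hS.adjoint_comp_self hs hr
  have hr0 : 0 < √r :=
    pos_of_mul_pos_left (hnorm h₀ ▸ norm_pos_iff.2 hh₀) (norm_nonneg h₀)
  let U : H →ₗᵢ[ℂ] V :=
    { toLinearMap := (((√r)⁻¹ : ℝ) : ℂ) • (S : H →ₗ[ℂ] V)
      norm_map' := fun h => by
        simp [norm_smul, hnorm, abs_of_pos hr0, hr0.ne'] }
  have hU : Intertwines π σ U.toContinuousLinearMap := fun g h => by simp [U, hS g h]
  exact ⟨.ofSurjective U (hσ.surjective_of_intertwines U hU), hU⟩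

end UnitaryRep

theorem schur_orthogonality_inequivalent_general
    {G : Type*} [Group G] [TopologicalSpace G] [IsTopologicalGroup G]
    [MeasurableSpace G] [BorelSpace G]
    (μ : Measure G) [μ.IsMulRightInvariant]
    {H : Type*} [NormedAddCommGroup H] [InnerProductSpace ℂ H] [CompleteSpace H]
    {V : Type*} [NormedAddCommGroup V] [InnerProductSpace ℂ V] [CompleteSpace V]
    (π : G →* (H ≃ₗᵢ[ℂ] H)) (σ : G →* (V ≃ₗᵢ[ℂ] V))
    -- irreducibility of both representations:
    (hirrπ : ∀ W : Submodule ℂ H, IsClosed (W : Set H) →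
      (∀ g : G, ∀ w ∈ W, π g w ∈ W) → W = ⊥ ∨ W = ⊤)
    (hirrσ : ∀ W : Submodule ℂ V, IsClosed (W : Set V) →
      (∀ g : G, ∀ w ∈ W, σ g w ∈ W) → W = ⊥ ∨ W = ⊤)
    -- square-integrability of all matrix coefficients:
    (hL2π : ∀ h h' : H, MemLp (fun g => (inner ℂ h' (π g h) : ℂ)) 2 μ)
    (hL2σ : ∀ v v' : V, MemLp (fun g => (inner ℂ v' (σ g v) : ℂ)) 2 μ)
    -- inequivalence:
    (hineq : ¬ ∃ e : H ≃ₗᵢ[ℂ] V, ∀ (g : G) (h : H), e (π g h) = σ g (e h)) :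
    ∀ (h h' : H) (v v' : V),
      ∫ g, (inner ℂ h' (π g h) : ℂ) * conj (inner ℂ v' (σ g v) : ℂ) ∂μ = 0 := by
  intro h h' v v'
  obtain ⟨T, hT⟩ := exists_continuousLinearMap_Lp_ae_eq
    (fun g => innerSL ℂ h' ∘L ((π g).toContinuousLinearEquiv : H →L[ℂ] H)) (hL2π · h')
  obtain ⟨U, hU⟩ := exists_continuousLinearMap_Lp_ae_eq
    (fun g => innerSL ℂ v' ∘L ((σ g).toContinuousLinearEquiv : V →L[ℂ] V)) (hL2σ · v')
  have hpair : ∀ k w, ⟪U w, T k⟫_ℂ = ∫ g, ⟪h', π g k⟫_ℂ * conj ⟪v', σ g w⟫_ℂ ∂μ := by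
    intro k w
    rw [L2.inner_def]
    refine integral_congr_ae ?_
    filter_upwards [hT k, hU w] with g hTg hUg
    simp [hTg, hUg, RCLike.inner_apply]
  have hinv : ∀ g k w, ⟪U (σ g w), T (π g k)⟫_ℂ = ⟪U w, T k⟫_ℂ := by
    intro g k w
    rw [hpair, hpair,
      ← integral_mul_right_eq_self (fun x => ⟪h', π x k⟫_ℂ * conj ⟪v', σ x w⟫_ℂ) g]
    simp only [map_mul, LinearIsometryEquiv.coe_mul, Function.comp_apply]
  have hS0 : U† ∘L T = 0 := by
    by_contra hS0
    exact hineq (UnitaryRep.IsIrreducible.exists_equiv_of_intertwines hirrπ hirrσ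
      (UnitaryRep.intertwines_adjoint_comp hinv) hS0)
  rw [← hpair, ← ContinuousLinearMap.adjoint_inner_right, ← ContinuousLinearMap.comp_apply, hS0]
  simp

/-- Matrix coefficients of two inequivalent irreducible square-integrable unitary
representations `(π, H)` and `(σ, V)` of a unimodular locally compact group `G` are
orthogonal in `L²(G)`:  `⟨c_{h,h'}, c_{v,v'}⟩_{L²(G)} = 0`.
Here `c_{h,h'}(g) = ⟨π(g)h, h'⟩ = ⟪h', π g h⟫_ℂ` (Mathlib's inner product is conjugate-linear
in the first variable), and "inequivalent" means there is no unitary `G`-equivariant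
isomorphism `H ≃ V`. -/
theorem schur_orthogonality_inequivalent
    {G : Type*} [Group G] [TopologicalSpace G] [IsTopologicalGroup G]
    [LocallyCompactSpace G] [MeasurableSpace G] [BorelSpace G]
    (μ : Measure G) [μ.IsHaarMeasure] [μ.IsMulRightInvariant]
    {H : Type*} [NormedAddCommGroup H] [InnerProductSpace ℂ H] [CompleteSpace H]
    {V : Type*} [NormedAddCommGroup V] [InnerProductSpace ℂ V] [CompleteSpace V]
    (π : G →* (H ≃ₗᵢ[ℂ] H)) (σ : G →* (V ≃ₗᵢ[ℂ] V))
    (hcontπ : ∀ h h' : H, Continuous fun g => (inner ℂ h' (π g h) : ℂ))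
    (hcontσ : ∀ v v' : V, Continuous fun g => (inner ℂ v' (σ g v) : ℂ))
    -- irreducibility of both representations:
    (hirrπ : ∀ W : Submodule ℂ H, IsClosed (W : Set H) →
      (∀ g : G, ∀ w ∈ W, π g w ∈ W) → W = ⊥ ∨ W = ⊤)
    (hirrσ : ∀ W : Submodule ℂ V, IsClosed (W : Set V) →
      (∀ g : G, ∀ w ∈ W, σ g w ∈ W) → W = ⊥ ∨ W = ⊤)
    -- square-integrability of all matrix coefficients:
    (hL2π : ∀ h h' : H, MemLp (fun g => (inner ℂ h' (π g h) : ℂ)) 2 μ)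
    (hL2σ : ∀ v v' : V, MemLp (fun g => (inner ℂ v' (σ g v) : ℂ)) 2 μ)
    -- inequivalence:
    (hineq : ¬ ∃ e : H ≃ₗᵢ[ℂ] V, ∀ (g : G) (h : H), e (π g h) = σ g (e h)) :
    ∀ (h h' : H) (v v' : V),
      ∫ g, (inner ℂ h' (π g h) : ℂ) * conj (inner ℂ v' (σ g v) : ℂ) ∂μ = 0 :=
  schur_orthogonality_inequivalent_general μ π σ hirrπ hirrσ hL2π hL2σ hineq
end

section
/- Let Γ ≤ Sp_{2n}(ℝ) be a discrete subgroup and (ρ, V) as above with all highest weight entries > 2n. For every K-finite vector f of the holomorphic discrete series H_ρ, the two Poincaré series are compatible: F_{P_{Γ,ρ} f} = P_Γ F_f, i.e., Σ_{γ∈Γ} F_f(γ g) = ((Σ_{γ∈Γ} f|_ρ γ)|_ρ g)(iI_n) for all g ∈ Sp_{2n}(ℝ), both series converging absolutely. -/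
open MeasureTheory Matrix ComplexConjugate

noncomputable section

/-- Index set for the entries of a symmetric `n × n` matrix. -/
def SymIdx (n : ℕ) := {p : Fin n × Fin n // p.1 ≤ p.2}

instance (n : ℕ) : Fintype (SymIdx n) := Subtype.fintype _

/-- The symmetric real matrix with upper-triangular entries `u`. -/
def symMat {n : ℕ} (u : SymIdx n → ℝ) : Matrix (Fin n) (Fin n) ℝ := fun i j =>
  if h : i ≤ j then u ⟨(i, j), h⟩ else u ⟨(j, i), le_of_not_ge h⟩

/-- The complex symmetric matrix with upper-triangular entries `w`. -/
def symMatC {n : ℕ} (w : SymIdx n → ℂ) : Matrix (Fin n) (Fin n) ℂ := fun i j =>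
  if h : i ≤ j then w ⟨(i, j), h⟩ else w ⟨(j, i), le_of_not_ge h⟩

/-- The complex symmetric matrix `z = x + i y` with real coordinates `u = (x, y)`. -/
def mkZ {n : ℕ} (u : (SymIdx n → ℝ) × (SymIdx n → ℝ)) : Matrix (Fin n) (Fin n) ℂ :=
  (symMat u.1).map (fun r => (r : ℂ)) + Complex.I • (symMat u.2).map (fun r => (r : ℂ))

/-- The Siegel upper half-space `ℋ_n`. -/
def Siegel (n : ℕ) : Set (Matrix (Fin n) (Fin n) ℂ) :=
  {z | zᵀ = z ∧ (Matrix.of fun i j => (z i j).im).PosDef}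

/-- `iI_n`, the base point of the Siegel upper half-space. -/
def basePt {n : ℕ} : Matrix (Fin n) (Fin n) ℂ := Complex.I • (1 : Matrix (Fin n) (Fin n) ℂ)

/-- Holomorphy of a `V`-valued function on `ℋ_n`, in the holomorphic coordinates given by
the upper-triangular entries. -/
def SiegelHolomorphic {n : ℕ} {V : Type*} [NormedAddCommGroup V] [NormedSpace ℂ V]
    (f : Matrix (Fin n) (Fin n) ℂ → V) : Prop :=
  DifferentiableOn ℂ (fun w : SymIdx n → ℂ => f (symMatC w))
    {w | (symMat fun p => (w p).im).PosDef}

/-- `f_{1,v}(z) = ρ((z + iI_n)/(2i))⁻¹ v`. -/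
def fOneV {n : ℕ} {V : Type*} [NormedAddCommGroup V] [InnerProductSpace ℂ V]
    (ρ : Matrix (Fin n) (Fin n) ℂ →* Module.End ℂ V) (v : V)
    (z : Matrix (Fin n) (Fin n) ℂ) : V :=
  Ring.inverse (ρ ((2 * Complex.I)⁻¹ • (z + basePt))) v

/-- The real symplectic group `Sp_{2n}(ℝ)`. -/
abbrev Sp (n : ℕ) := Matrix.symplecticGroup (Fin n) ℝ

/-- `Cz + D` for `g = [[A,B],[C,D]] ∈ Sp_{2n}(ℝ)`. -/
def den {n : ℕ} (g : Sp n) (z : Matrix (Fin n) (Fin n) ℂ) : Matrix (Fin n) (Fin n) ℂ :=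
  ((g : Matrix (Fin n ⊕ Fin n) (Fin n ⊕ Fin n) ℝ).toBlocks₂₁.map (fun r => (r : ℂ))) * z
    + ((g : Matrix (Fin n ⊕ Fin n) (Fin n ⊕ Fin n) ℝ).toBlocks₂₂.map (fun r => (r : ℂ)))

/-- `g.z = (Az + B)(Cz + D)⁻¹`. -/
def act {n : ℕ} (g : Sp n) (z : Matrix (Fin n) (Fin n) ℂ) : Matrix (Fin n) (Fin n) ℂ :=
  (((g : Matrix (Fin n ⊕ Fin n) (Fin n ⊕ Fin n) ℝ).toBlocks₁₁.map (fun r => (r : ℂ))) * z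
    + ((g : Matrix (Fin n ⊕ Fin n) (Fin n ⊕ Fin n) ℝ).toBlocks₁₂.map (fun r => (r : ℂ))))
    * (den g z)⁻¹

open scoped ComplexOrder in
/-- The square root of a positive semidefinite matrix (Mathlib's former
`Matrix.PosSemidef.sqrt`, removed upstream), with its old definition. -/
def Matrix.PosSemidef.sqrt {m : Type*} [Fintype m] [DecidableEq m] {𝕜 : Type*} [RCLike 𝕜]
    {A : Matrix m m 𝕜} (hA : A.PosSemidef) : Matrix m m 𝕜 :=
  (hA.1.eigenvectorUnitary : Matrix m m 𝕜) * diagonal ((↑) ∘ (√·) ∘ hA.1.eigenvalues)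
    * (star hA.1.eigenvectorUnitary : Matrix m m 𝕜)

/-- The weight-`ρ` slash action: `(f |_ρ g)(z) = ρ(Cz+D)⁻¹ f(g.z)`. -/
def slash {n : ℕ} {V : Type*} [NormedAddCommGroup V] [InnerProductSpace ℂ V]
    (ρ : Matrix (Fin n) (Fin n) ℂ →* Module.End ℂ V)
    (f : Matrix (Fin n) (Fin n) ℂ → V) (g : Sp n) (z : Matrix (Fin n) (Fin n) ℂ) : V :=
  Ring.inverse (ρ (den g z)) (f (act g z))

/-- The coordinate version of the action of `Sp_{2n}(ℝ)` on `ℋ_n`. -/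
def coordAct {n : ℕ} (g : Sp n) (u : (SymIdx n → ℝ) × (SymIdx n → ℝ)) :
    (SymIdx n → ℝ) × (SymIdx n → ℝ) :=
  (fun p => (act g (mkZ u) p.1.1 p.1.2).re, fun p => (act g (mkZ u) p.1.1 p.1.2).im)


/-- The lift `F_f(g) = (f |_ρ g)(iI_n)` of a function on `ℋ_n` to `Sp_{2n}(ℝ)`. -/
def lift {n : ℕ} {V : Type*} [NormedAddCommGroup V] [InnerProductSpace ℂ V]
    (ρ : Matrix (Fin n) (Fin n) ℂ →* Module.End ℂ V)
    (f : Matrix (Fin n) (Fin n) ℂ → V) (g : Sp n) : V :=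
  slash ρ f g basePt

/-- `K`-finiteness of a vector `f` of `H_ρ`, for the maximal compact subgroup
`K = Stab(iI_n)` of `Sp_{2n}(ℝ)` acting by `π_ρ(g) f = f |_ρ g⁻¹`. -/
def IsHKFinite {n : ℕ} {V : Type*} [NormedAddCommGroup V] [InnerProductSpace ℂ V]
    (ρ : Matrix (Fin n) (Fin n) ℂ →* Module.End ℂ V)
    (f : Matrix (Fin n) (Fin n) ℂ → V) : Prop :=
  FiniteDimensional ℂ (Submodule.span ℂ
    (Set.range fun k : {g : Sp n // act g basePt = basePt} =>
      fun z => slash ρ f ((k : Sp n))⁻¹ z))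

/-! Write `g = [[A, B], [C, D]]`. Right translation turns the slash action into a cocycle,
`(f |_ρ γ) |_ρ g = f |_ρ (γ g)`. At `iIₙ` it writes every term `F_f(γ g)` of `P_Γ F_f(g)` as one
fixed linear map `ρ(C·iIₙ + D)⁻¹` applied to the term `(f |_ρ γ)(g·iIₙ)` of `P_{Γ,ρ} f`. Since
`g·iIₙ ∈ ℋₙ`, the latter series converges absolutely, and a linear map of the finite-dimensional
space `V` is continuous, so it preserves absolute convergence and commutes with the sum.

The cocycle identity comes from `g [z; 1] = [Az + B; Cz + D]`. A real symplectic `g` preserves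
the forms `Wᵀ J W` and `Wᴴ J W`; for `W = [z; 1]` they give `(Cz + D)ᵀ(Az + B) = (Az + B)ᵀ(Cz + D)`
for symmetric `z`, and `(Cz + D)ᴴ(Az + B) - (Az + B)ᴴ(Cz + D) = z - zᴴ`. Hence `Cz + D` is
invertible on `ℋₙ` and `g` maps `ℋₙ` to itself. -/

section RealMatrix

variable {m : Type*} [Fintype m]

lemma re_star_dotProduct_map_ofReal_mulVec (M : Matrix m m ℝ) (v : m → ℂ) :
    (star v ⬝ᵥ M.map (↑) *ᵥ v).re
      = (fun i => (v i).re) ⬝ᵥ M *ᵥ (fun i => (v i).re)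
        + (fun i => (v i).im) ⬝ᵥ M *ᵥ (fun i => (v i).im) := by
  simp only [dotProduct, mulVec, Complex.re_sum, Finset.mul_sum, ← Finset.sum_add_distrib]
  refine Finset.sum_congr rfl fun i _ => Finset.sum_congr rfl fun j _ => ?_
  simp [Complex.mul_re, Complex.mul_im]

open scoped ComplexOrder in
lemma Matrix.PosDef.map_ofReal {M : Matrix m m ℝ} (hM : M.PosDef) :
    (M.map ((↑) : ℝ → ℂ)).PosDef := by
  have hH : (M.map ((↑) : ℝ → ℂ)).IsHermitian := by
    ext i j
    simpa using congrFun (congrFun hM.1 i) j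
  refine .of_dotProduct_mulVec_pos hH fun v hv => Complex.pos_iff.mpr ⟨?_, ?_⟩
  · have hre := hM.posSemidef.dotProduct_mulVec_nonneg (fun i => (v i).re)
    have him := hM.posSemidef.dotProduct_mulVec_nonneg (fun i => (v i).im)
    have hv' : (fun i => (v i).re) ≠ 0 ∨ (fun i => (v i).im) ≠ 0 := by
      by_contra! h
      exact hv (funext fun i => Complex.ext (congrFun h.1 i) (congrFun h.2 i))
    rw [re_star_dotProduct_map_ofReal_mulVec]
    simp only [star_trivial] at hre him ⊢
    rcases hv' with h | h
    all_goals
      have hpos := hM.dotProduct_mulVec_pos h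
      rw [star_trivial] at hpos
      linarith
  · exact (hH.im_star_dotProduct_mulVec_self v).symm

open scoped ComplexOrder in
lemma Matrix.PosDef.of_map_ofReal {M : Matrix m m ℝ} (hM : (M.map ((↑) : ℝ → ℂ)).PosDef) :
    M.PosDef := by
  refine .of_dotProduct_mulVec_pos ?_ fun x hx => ?_
  · ext i j
    simpa using congrFun (congrFun hM.1 i) j
  · have hxC : (fun i => (x i : ℂ)) ≠ 0 := fun h => hx (funext fun i => by simpa using congrFun h i)
    simpa [re_star_dotProduct_map_ofReal_mulVec] using
      (Complex.pos_iff.mp (hM.dotProduct_mulVec_pos hxC)).1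

end RealMatrix

section SymplecticForm

variable {l m R : Type*} [Fintype l] [DecidableEq l] [CommRing R]

lemma Matrix.transpose_fromRows_mul_J_mul_fromRows (X₁ X₂ Y₁ Y₂ : Matrix l m R) :
    (fromRows X₁ X₂)ᵀ * J l R * fromRows Y₁ Y₂ = X₂ᵀ * Y₁ - X₁ᵀ * Y₂ := by
  simp [J, transpose_fromRows, fromCols_mul_fromBlocks, fromCols_mul_fromRows, sub_eq_add_neg]

lemma Matrix.conjTranspose_fromRows_mul_J_mul_fromRows [StarRing R] (X₁ X₂ Y₁ Y₂ : Matrix l m R) :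
    (fromRows X₁ X₂)ᴴ * J l R * fromRows Y₁ Y₂ = X₂ᴴ * Y₁ - X₁ᴴ * Y₂ := by
  simp [J, conjTranspose_fromRows_eq_fromCols_conjTranspose, fromCols_mul_fromBlocks,
    fromCols_mul_fromRows, sub_eq_add_neg]

end SymplecticForm

section Complexify

variable {l m : Type*} [Fintype l] [DecidableEq l]

lemma Matrix.transpose_map_ofReal_mul_J_mul {g : Matrix (l ⊕ l) (l ⊕ l) ℝ}
    (hg : g ∈ symplecticGroup l ℝ) :
    (g.map Complex.ofRealHom)ᵀ * J l ℂ * g.map Complex.ofRealHom = J l ℂ := by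
  rw [← map_J l Complex.ofRealHom, ← transpose_map, ← Matrix.map_mul,
    ← Matrix.map_mul, SymplecticGroup.mem_iff'.mp hg]

lemma Matrix.transpose_map_ofReal_mul_mul_J_mul {g : Matrix (l ⊕ l) (l ⊕ l) ℝ}
    (hg : g ∈ symplecticGroup l ℝ) (W : Matrix (l ⊕ l) m ℂ) :
    (g.map Complex.ofRealHom * W)ᵀ * J l ℂ * (g.map Complex.ofRealHom * W)
      = Wᵀ * J l ℂ * W := by
  conv_rhs => rw [← transpose_map_ofReal_mul_J_mul hg]
  simp only [transpose_mul, Matrix.mul_assoc]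

lemma Matrix.conjTranspose_map_ofReal_mul_mul_J_mul {g : Matrix (l ⊕ l) (l ⊕ l) ℝ}
    (hg : g ∈ symplecticGroup l ℝ) (W : Matrix (l ⊕ l) m ℂ) :
    (g.map Complex.ofRealHom * W)ᴴ * J l ℂ * (g.map Complex.ofRealHom * W)
      = Wᴴ * J l ℂ * W := by
  have h : (g.map Complex.ofRealHom)ᴴ = (g.map Complex.ofRealHom)ᵀ := by
    ext i j; simp
  conv_rhs => rw [← transpose_map_ofReal_mul_J_mul hg]
  simp only [conjTranspose_mul, h, Matrix.mul_assoc]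

end Complexify

section MatrixInverse

variable {m K : Type*} [Fintype m] [DecidableEq m] [CommRing K]

lemma Matrix.transpose_mul_nonsing_inv_of_transpose_mul_comm {N D : Matrix m m K}
    (hND : Nᵀ * D = Dᵀ * N) (hD : IsUnit D.det) : (N * D⁻¹)ᵀ = N * D⁻¹ := by
  have hDT : IsUnit Dᵀ.det := by rwa [det_transpose]
  have hN : Nᵀ = Dᵀ * (N * D⁻¹) := by
    rw [← Matrix.mul_assoc, ← hND, mul_nonsing_inv_cancel_right _ _ hD]
  rw [transpose_mul, transpose_nonsing_inv, hN, nonsing_inv_mul_cancel_left _ _ hDT]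

lemma Matrix.mul_nonsing_inv_sub_conjTranspose [StarRing K] {N D : Matrix m m K}
    (hD : IsUnit D.det) :
    N * D⁻¹ - (N * D⁻¹)ᴴ = D⁻¹ᴴ * (Dᴴ * N - Nᴴ * D) * D⁻¹ := by
  have hDH : D⁻¹ᴴ * Dᴴ = 1 := by rw [← conjTranspose_mul, mul_nonsing_inv _ hD, conjTranspose_one]
  rw [Matrix.mul_sub, Matrix.sub_mul, ← Matrix.mul_assoc, hDH, Matrix.one_mul, Matrix.mul_assoc,
    Matrix.mul_assoc, mul_nonsing_inv _ hD, Matrix.mul_one, conjTranspose_mul]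

end MatrixInverse

section SymplecticAction

variable {n : ℕ}

def num (g : Sp n) (z : Matrix (Fin n) (Fin n) ℂ) : Matrix (Fin n) (Fin n) ℂ :=
  ((g : Matrix (Fin n ⊕ Fin n) (Fin n ⊕ Fin n) ℝ).toBlocks₁₁.map (fun r => (r : ℂ))) * z
    + ((g : Matrix (Fin n ⊕ Fin n) (Fin n ⊕ Fin n) ℝ).toBlocks₁₂.map (fun r => (r : ℂ)))

lemma act_eq_num_mul_inv_den (g : Sp n) (z : Matrix (Fin n) (Fin n) ℂ) :
    act g z = num g z * (den g z)⁻¹ := rfl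

-- Without the ascription on `1`, the default instance makes `*` the `CStarMatrix` product.
lemma map_ofReal_mul_fromRows (g : Sp n) (z : Matrix (Fin n) (Fin n) ℂ) :
    (g : Matrix (Fin n ⊕ Fin n) (Fin n ⊕ Fin n) ℝ).map Complex.ofRealHom
        * fromRows z (1 : Matrix (Fin n) (Fin n) ℂ)
      = fromRows (num g z) (den g z) := by
  conv_lhs => rw [← fromBlocks_toBlocks (g : Matrix (Fin n ⊕ Fin n) (Fin n ⊕ Fin n) ℝ)]
  rw [fromBlocks_map, fromBlocks_mul_fromRows, Matrix.mul_one, Matrix.mul_one]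
  rfl

lemma den_conjTranspose_mul_num_sub (g : Sp n) (z : Matrix (Fin n) (Fin n) ℂ) :
    (den g z)ᴴ * num g z - (num g z)ᴴ * den g z = z - zᴴ := by
  have h := conjTranspose_map_ofReal_mul_mul_J_mul g.2 (fromRows z 1)
  rwa [map_ofReal_mul_fromRows, conjTranspose_fromRows_mul_J_mul_fromRows,
    conjTranspose_fromRows_mul_J_mul_fromRows, conjTranspose_one, Matrix.one_mul,
    Matrix.mul_one] at h

lemma num_transpose_mul_den (g : Sp n) {z : Matrix (Fin n) (Fin n) ℂ} (hz : zᵀ = z) :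
    (num g z)ᵀ * den g z = (den g z)ᵀ * num g z := by
  have h := transpose_map_ofReal_mul_mul_J_mul g.2 (fromRows z 1)
  rw [map_ofReal_mul_fromRows, transpose_fromRows_mul_J_mul_fromRows,
    transpose_fromRows_mul_J_mul_fromRows, transpose_one, Matrix.one_mul, Matrix.mul_one, hz,
    sub_self, sub_eq_zero] at h
  exact h.symm

lemma fromRows_num_den_mul (p q : Sp n) {z : Matrix (Fin n) (Fin n) ℂ}
    (hq : IsUnit (den q z).det) :
    fromRows (num (p * q) z) (den (p * q) z)
      = fromRows (num p (act q z) * den q z) (den p (act q z) * den q z) := by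
  have hW : fromRows (num q z) (den q z)
      = fromRows (act q z) (1 : Matrix (Fin n) (Fin n) ℂ) * den q z := by
    rw [fromRows_mul, Matrix.one_mul, act_eq_num_mul_inv_den,
      nonsing_inv_mul_cancel_right _ _ hq]
  rw [← map_ofReal_mul_fromRows, Submonoid.coe_mul, Matrix.map_mul, Matrix.mul_assoc,
    map_ofReal_mul_fromRows, hW, ← Matrix.mul_assoc, map_ofReal_mul_fromRows, fromRows_mul]

lemma den_mul (p q : Sp n) {z : Matrix (Fin n) (Fin n) ℂ} (hq : IsUnit (den q z).det) :
    den (p * q) z = den p (act q z) * den q z :=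
  (fromRows_inj (fromRows_num_den_mul p q hq)).2

lemma act_mul (p q : Sp n) {z : Matrix (Fin n) (Fin n) ℂ} (hq : IsUnit (den q z).det) :
    act (p * q) z = act p (act q z) := by
  obtain ⟨hnum, hden⟩ := fromRows_inj (fromRows_num_den_mul p q hq)
  rw [act_eq_num_mul_inv_den (p * q), hnum, hden, Matrix.mul_inv_rev, Matrix.mul_assoc,
    mul_nonsing_inv_cancel_left _ _ hq]
  rfl

end SymplecticAction

namespace Siegel

open Complex
open scoped ComplexOrder

variable {n : ℕ}

lemma mem_iff {z : Matrix (Fin n) (Fin n) ℂ} :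
    z ∈ Siegel n ↔ zᵀ = z ∧ ((2 * I)⁻¹ • (z - zᴴ)).PosDef := by
  refine and_congr_right fun hz => ?_
  have him : (2 * I)⁻¹ • (z - zᴴ) = (Matrix.of fun i j => (z i j).im).map (↑) := by
    ext i j
    have hji : z j i = z i j := congrFun (congrFun hz i) j
    simp only [Matrix.smul_apply, Matrix.sub_apply, conjTranspose_apply, hji, RCLike.star_def,
      sub_conj, map_apply, of_apply, smul_eq_mul]
    push_cast
    field_simp
  rw [him]
  exact ⟨.map_ofReal, .of_map_ofReal⟩

lemma isUnit_den_det (g : Sp n) {z : Matrix (Fin n) (Fin n) ℂ} (hz : z ∈ Siegel n) :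
    IsUnit (den g z).det := by
  rw [isUnit_iff_ne_zero, Ne, ← exists_mulVec_eq_zero_iff]
  rintro ⟨v, hv, hdv⟩
  have h0 : star v ⬝ᵥ ((z - zᴴ) *ᵥ v) = 0 := by
    rw [← den_conjTranspose_mul_num_sub g z, sub_mulVec, ← mulVec_mulVec, ← mulVec_mulVec, hdv,
      mulVec_zero, sub_zero, dotProduct_mulVec, ← star_mulVec, hdv, star_zero, zero_dotProduct]
  have hpos := (mem_iff.mp hz).2.dotProduct_mulVec_pos hv
  rw [smul_mulVec, dotProduct_smul, h0, smul_zero] at hpos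
  exact lt_irrefl 0 hpos

lemma act_mem (g : Sp n) {z : Matrix (Fin n) (Fin n) ℂ} (hz : z ∈ Siegel n) :
    act g z ∈ Siegel n := by
  have hd := isUnit_den_det g hz
  obtain ⟨hsym, hpos⟩ := mem_iff.mp hz
  refine mem_iff.mpr ⟨transpose_mul_nonsing_inv_of_transpose_mul_comm
    (num_transpose_mul_den g hsym) hd, ?_⟩
  rw [act_eq_num_mul_inv_den, mul_nonsing_inv_sub_conjTranspose hd,
    den_conjTranspose_mul_num_sub, ← Matrix.smul_mul, ← Matrix.mul_smul]
  exact hpos.conjTranspose_mul_mul_same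
    (mulVec_injective_iff_isUnit.mpr ((isUnit_iff_isUnit_det _).mpr (isUnit_nonsing_inv_det _ hd)))

lemma basePt_mem : (basePt : Matrix (Fin n) (Fin n) ℂ) ∈ Siegel n := by
  refine ⟨by simp [basePt], ?_⟩
  convert PosDef.one (n := Fin n) (R := ℝ)
  ext i j
  by_cases h : i = j <;> simp [basePt, one_apply, h]

end Siegel

section Slash

variable {n : ℕ} {V : Type*} [NormedAddCommGroup V] [InnerProductSpace ℂ V]
  (ρ : Matrix (Fin n) (Fin n) ℂ →* Module.End ℂ V)

lemma slash_mul (f : Matrix (Fin n) (Fin n) ℂ → V) (p q : Sp n)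
    {z : Matrix (Fin n) (Fin n) ℂ} (hq : IsUnit (den q z).det) :
    slash ρ f (p * q) z = slash ρ (slash ρ f p) q z := by
  have hρq : IsUnit (ρ (den q z)) := ((isUnit_iff_isUnit_det _).mpr hq).map ρ
  rw [slash, act_mul p q hq, den_mul p q hq, map_mul, Ring.inverse_mul (.inr hρq),
    Module.End.mul_apply]
  rfl

variable [FiniteDimensional ℂ V]

lemma summable_norm_slash {ι : Type*} (F : ι → Matrix (Fin n) (Fin n) ℂ → V) (g : Sp n)
    (z : Matrix (Fin n) (Fin n) ℂ) (hF : Summable fun i => ‖F i (act g z)‖) :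
    Summable fun i => ‖slash ρ (F i) g z‖ := by
  let T := LinearMap.toContinuousLinearMap (Ring.inverse (ρ (den g z)))
  exact (hF.mul_left ‖T‖).of_nonneg_of_le (fun _ => norm_nonneg _) fun i => T.le_opNorm _

lemma slash_tsum {ι : Type*} (F : ι → Matrix (Fin n) (Fin n) ℂ → V) (g : Sp n)
    (z : Matrix (Fin n) (Fin n) ℂ) (hF : Summable fun i => ‖F i (act g z)‖) :
    slash ρ (fun w => ∑' i, F i w) g z = ∑' i, slash ρ (F i) g z :=
  (LinearMap.toContinuousLinearMap (Ring.inverse (ρ (den g z)))).map_tsum hF.of_norm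

end Slash

open Classical in
theorem lift_poincare_series_compatible_general
    {n : ℕ}
    {V : Type*} [NormedAddCommGroup V] [InnerProductSpace ℂ V] [FiniteDimensional ℂ V]
    (ρ : Matrix (Fin n) (Fin n) ℂ →* Module.End ℂ V)
    -- a discrete subgroup `Γ` of `Sp_{2n}(ℝ)`:
    (Γ : Subgroup (Sp n))
    -- a `K`-finite vector `f` of `H_ρ`:
    (f : Matrix (Fin n) (Fin n) ℂ → V)
    -- absolute convergence of the Poincaré series `P_{Γ,ρ} f` on `ℋ_n`:
    (hP : ∀ z ∈ Siegel n, Summable fun γ : Γ => ‖slash ρ f (γ : Sp n) z‖) :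
    ∀ g : Sp n,
      (Summable fun γ : Γ => ‖lift ρ f ((γ : Sp n) * g)‖) ∧
      ∑' γ : Γ, lift ρ f ((γ : Sp n) * g)
        = slash ρ (fun z => ∑' γ : Γ, slash ρ f (γ : Sp n) z) g basePt := by
  intro g
  have hg := Siegel.isUnit_den_det g Siegel.basePt_mem
  have hsum := hP _ (Siegel.act_mem g Siegel.basePt_mem)
  have hcocycle : ∀ γ : Γ, lift ρ f ((γ : Sp n) * g) = slash ρ (slash ρ f γ) g basePt :=
    fun γ => slash_mul ρ f γ g hg
  simp only [hcocycle]
  exact ⟨summable_norm_slash ρ _ g basePt hsum, (slash_tsum ρ _ g basePt hsum).symm⟩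

open Classical in
/-- **Compatibility of the two Poincaré series** (`F_{P_{Γ,ρ} f} = P_Γ F_f`):
for a discrete subgroup `Γ ≤ Sp_{2n}(ℝ)`, a representation `(ρ, V)` as above with highest
weight entries `> 2n`, and a `K`-finite `f ∈ H_ρ` whose Poincaré series
`P_{Γ,ρ} f = ∑_{γ∈Γ} f|_ρ γ` converges absolutely on `ℋ_n`, the series
`P_Γ F_f(g) = ∑_{γ∈Γ} F_f(γ g)` also converges absolutely, and
`∑_{γ∈Γ} F_f(γ g) = ((∑_{γ∈Γ} f|_ρ γ)|_ρ g)(iI_n)` for all `g ∈ Sp_{2n}(ℝ)`. -/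
theorem lift_poincare_series_compatible
    {n : ℕ} (hn : 0 < n)
    {V : Type*} [NormedAddCommGroup V] [InnerProductSpace ℂ V] [FiniteDimensional ℂ V]
    (ρ : Matrix (Fin n) (Fin n) ℂ →* Module.End ℂ V)
    (hρ_poly : ∀ (w : V) (l : V →ₗ[ℂ] ℂ), ∃ P : MvPolynomial (Fin n × Fin n) ℂ,
      ∀ M : Matrix (Fin n) (Fin n) ℂ, l (ρ M w) = MvPolynomial.eval (fun p => M p.1 p.2) P)
    (hρ_irr : ∀ W : Submodule ℂ V,
      (∀ M : Matrix (Fin n) (Fin n) ℂ, IsUnit M.det → ∀ w ∈ W, ρ M w ∈ W) → W = ⊥ ∨ W = ⊤)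
    (hρ_unit : ∀ M ∈ Matrix.unitaryGroup (Fin n) ℂ, ∀ w w' : V,
      (inner ℂ (ρ M w) (ρ M w') : ℂ) = inner ℂ w w')
    (ω : Fin n → ℤ) (hω_mono : ∀ i j : Fin n, i ≤ j → ω j ≤ ω i)
    (hω_big : ∀ i : Fin n, 2 * (n : ℤ) < ω i)
    (vtop : V) (hvtop_norm : ‖vtop‖ = 1)
    (hvtop_borel : ∀ M : Matrix (Fin n) (Fin n) ℂ, (∀ i j : Fin n, j < i → M i j = 0) →
      IsUnit M.det → ∃ c : ℂ, ρ M vtop = c • vtop)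
    (hvtop_diag : ∀ a : Fin n → ℂ, (∀ i, a i ≠ 0) →
      ρ (Matrix.diagonal a) vtop = (∏ i, a i ^ ω i) • vtop)
    -- a discrete subgroup `Γ` of `Sp_{2n}(ℝ)`:
    (Γ : Subgroup (Sp n)) (hΓ : DiscreteTopology Γ)
    -- a `K`-finite vector `f` of `H_ρ`:
    (f : Matrix (Fin n) (Fin n) ℂ → V)
    (hf_hol : SiegelHolomorphic f)
    (hf_L2 : Integrable (fun u : (SymIdx n → ℝ) × (SymIdx n → ℝ) =>
      if h : (symMat u.2).PosDef then
        ‖ρ (h.posSemidef.sqrt.map (fun r => (r : ℂ))) (f (mkZ u))‖ ^ 2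
          * (symMat u.2).det ^ (-(n : ℤ) - 1)
      else 0))
    (hf_K : IsHKFinite ρ f)
    -- absolute convergence of the Poincaré series `P_{Γ,ρ} f` on `ℋ_n`:
    (hP : ∀ z ∈ Siegel n, Summable fun γ : Γ => ‖slash ρ f (γ : Sp n) z‖) :
    ∀ g : Sp n,
      (Summable fun γ : Γ => ‖lift ρ f ((γ : Sp n) * g)‖) ∧
      ∑' γ : Γ, lift ρ f ((γ : Sp n) * g)
        = slash ρ (fun z => ∑' γ : Γ, slash ρ f (γ : Sp n) z) g basePt :=
  lift_poincare_series_compatible_general ρ Γ f hP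

end
end
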